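/- arXiv:2307.16736 — 2 statements merged into one kernel-verified Lean document; each statement's English description precedes it below -/
import Mathlib

section
/- For every real $a > 0$ and every real $x$ with $0 < x \leq 1$, the Bessel function of the first kind satisfies $x^a J_a(a) \leq J_a(ax) \leq e^{a(1-x)} x^a J_a(a)$; in particular $J_a(ax) > 0$ whenever $J_a(a) > 0$. -/
/-!
Write `J_a(z) = (z/2)^a φ_a((z/2)^2)` with the entire function
`φ_a(t) = ∑ₘ (-1)^m t^m / (m! Γ(m+a+1))`. Then `φ_a' = -φ_{a+1}` and
`φ_a + t φ_{a+2} = (a+1) φ_{a+1}`. On `[0, a^2/4]` the functions `φ_a`, `φ_{a+1}` stay positive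
and `t φ_{a+1}^2 < φ_a^2`, by a first-failure argument: `φ_{a+1}` stays positive because
`(t^{a+1} φ_{a+1})' = t^a φ_a`, and at a first zero of `E = φ_a^2 - t φ_{a+1}^2` we would have
`φ_a ≤ (a/2) φ_{a+1}`, so `E' = φ_{a+1} ((2a+1) φ_{a+1} - 4 φ_a) > 0`.
Consequently `φ_a` decreases on `[0, a^2/4]`, which is the lower bound, and with `s = ay/2` the
function `y ↦ e^{ay} φ_a(s^2)` has derivative `a e^{ay} (φ_a(s^2) - s φ_{a+1}(s^2)) ≥ 0`,
which is the upper bound.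
-/

/-- The Bessel function of the first kind of (real) order `a`, defined by its power
series `J_a(z) = ∑ₘ (-1)^m / (m! Γ(m+a+1)) (z/2)^(2m+a)`. -/
noncomputable def besselJ (a x : ℝ) : ℝ :=
  ∑' m : ℕ, ((-1 : ℝ) ^ m / ((m.factorial : ℝ) * Real.Gamma ((m : ℝ) + a + 1))) *
    (x / 2) ^ (2 * (m : ℝ) + a)

open Real Filter Set Topology
open scoped Nat

theorem Icc_subset_of_isOpen_of_forall_Ico_subset {α : Type*} [ConditionallyCompleteLinearOrder α]
    [TopologicalSpace α] [OrderTopology α] {U : Set α} (hU : IsOpen U) {a b : α} (ha : a ∈ U)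
    (h : ∀ t ∈ Ioc a b, Ico a t ⊆ U → t ∈ U) : Icc a b ⊆ U := by
  intro x hx
  by_contra hxU
  have hbdd : BddBelow (Icc a b \ U) := ⟨a, fun t ht => ht.1.1⟩
  obtain ⟨⟨hat₀, ht₀b⟩, ht₀U⟩ := (isClosed_Icc.sdiff hU).csInf_mem ⟨x, hx, hxU⟩ hbdd
  refine ht₀U (h _ ⟨hat₀.lt_of_ne fun e => ht₀U (e ▸ ha), ht₀b⟩ fun t ht => ?_)
  by_contra htU
  exact (csInf_le hbdd ⟨⟨ht.1, ht.2.le.trans ht₀b⟩, htU⟩).not_gt ht.2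

theorem HasDerivAt.eventually_nhdsLT_lt {f : ℝ → ℝ} {f' x : ℝ} (hf : HasDerivAt f f' x)
    (hf' : 0 < f') : ∀ᶠ t in 𝓝[<] x, f t < f x := by
  have hslope := (hasDerivAt_iff_tendsto_slope.1 hf).mono_left (nhdsLT_le_nhdsNE x)
  filter_upwards [hslope.eventually (eventually_gt_nhds hf'), self_mem_nhdsWithin]
    with t hpos (ht : t < x)
  exact (slope_pos_iff_gt ht).1 hpos

section ExpTypeSeries

variable {c : ℕ → ℝ} {C : ℝ}

theorem summable_mul_pow_of_abs_le (hc : ∀ n, |c n| ≤ C / n !) (t : ℝ) :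
    Summable fun n => c n * t ^ n := by
  refine .of_norm_bounded ((Real.summable_pow_div_factorial |t|).mul_left C) fun n => ?_
  rw [norm_mul, norm_pow, Real.norm_eq_abs, Real.norm_eq_abs]
  calc |c n| * |t| ^ n ≤ C / n ! * |t| ^ n := by gcongr; exact hc n
    _ = C * (|t| ^ n / n !) := by ring

theorem hasDerivAt_tsum_mul_pow_of_abs_le (hc : ∀ n, |c n| ≤ C / n !) (t : ℝ) :
    HasDerivAt (fun y => ∑' n, c n * y ^ n) (∑' n, (n + 1) * c (n + 1) * t ^ n) t := by
  set R := |t| + 1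
  have hbound : ∀ n, ∀ y ∈ Metric.ball (0 : ℝ) R,
      ‖c n * (n * y ^ (n - 1))‖ ≤ C * (n * R ^ (n - 1) / n !) := by
    intro n y hy
    rw [mem_ball_zero_iff, Real.norm_eq_abs] at hy
    rw [norm_mul, norm_mul, norm_pow, Real.norm_eq_abs, Real.norm_eq_abs, Real.norm_eq_abs,
      Nat.abs_cast]
    calc |c n| * (n * |y| ^ (n - 1)) ≤ C / n ! * (n * R ^ (n - 1)) := by
          have hC : 0 ≤ C := (abs_nonneg _).trans (by simpa using hc 0)
          gcongr
          exact hc n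
      _ = C * (n * R ^ (n - 1) / n !) := by ring
  have hsum : Summable fun n : ℕ => C * (n * R ^ (n - 1) / n !) := by
    refine .mul_left C ((summable_nat_add_iff 1).1 ((Real.summable_pow_div_factorial R).congr
      fun n => ?_))
    rw [Nat.add_sub_cancel, Nat.factorial_succ]
    push_cast
    field_simp
  have hR : t ∈ Metric.ball (0 : ℝ) R := by simp [R]
  have hderiv := hasDerivAt_tsum_of_isPreconnected hsum Metric.isOpen_ball
    (convex_ball 0 R).isPreconnected (fun n y _ => (hasDerivAt_pow n y).const_mul (c n)) hbound
    (Metric.mem_ball_self (by positivity)) (summable_mul_pow_of_abs_le hc 0) hR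
  have hshift : ∑' n : ℕ, c n * (n * t ^ (n - 1)) = ∑' n : ℕ, (n + 1) * c (n + 1) * t ^ n := by
    rw [(Summable.of_norm_bounded hsum fun n => hbound n t hR).tsum_eq_zero_add]
    simp only [Nat.cast_zero, zero_mul, mul_zero, zero_add, Nat.add_sub_cancel, Nat.cast_add,
      Nat.cast_one]
    congr 1 with n
    ring
  exact hshift ▸ hderiv

end ExpTypeSeries

noncomputable def besselCoeff (b : ℝ) (m : ℕ) : ℝ :=
  (-1) ^ m / (m ! * Gamma (m + b + 1))

noncomputable def besselPhi (b t : ℝ) : ℝ :=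
  ∑' m, besselCoeff b m * t ^ m

section Coefficients

variable {b : ℝ}

theorem Gamma_add_one_le_Gamma_nat_add (hb : 0 ≤ b) (m : ℕ) :
    Gamma (b + 1) ≤ Gamma (m + b + 1) := by
  induction m with
  | zero => simp
  | succ m ih =>
    have hm : 1 ≤ (m : ℝ) + b + 1 := by linarith [m.cast_nonneg (α := ℝ)]
    rw [Nat.cast_succ, add_right_comm _ 1 b, Gamma_add_one (s := m + b + 1) (by positivity)]
    nlinarith [Gamma_pos_of_pos (by positivity : (0 : ℝ) < m + b + 1)]

theorem abs_besselCoeff_le (hb : 0 ≤ b) (m : ℕ) :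
    |besselCoeff b m| ≤ (Gamma (b + 1))⁻¹ / m ! := by
  have hΓ : 0 < Gamma (b + 1) := Gamma_pos_of_pos (by positivity)
  have hm : 0 < (m : ℝ) + b + 1 := by linarith [m.cast_nonneg (α := ℝ)]
  rw [besselCoeff, abs_div, abs_pow, abs_neg, abs_one, one_pow,
    abs_of_pos (by have := Gamma_pos_of_pos hm; positivity)]
  calc 1 / (m ! * Gamma (m + b + 1)) ≤ 1 / (m ! * Gamma (b + 1)) := by
        gcongr
        exact Gamma_add_one_le_Gamma_nat_add hb m
    _ = (Gamma (b + 1))⁻¹ / m ! := by ring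

theorem besselCoeff_zero : besselCoeff b 0 = (Gamma (b + 1))⁻¹ := by
  simp [besselCoeff]

theorem succ_mul_besselCoeff_succ (b : ℝ) (m : ℕ) :
    (m + 1) * besselCoeff b (m + 1) = -besselCoeff (b + 1) m := by
  rw [besselCoeff, besselCoeff, Nat.factorial_succ, pow_succ]
  push_cast
  rw [show (m : ℝ) + 1 + b + 1 = m + (b + 1) + 1 by ring]
  field_simp

theorem besselCoeff_succ_add_besselCoeff_add_two (hb : -1 < b) (m : ℕ) :
    besselCoeff b (m + 1) + besselCoeff (b + 2) m = (b + 1) * besselCoeff (b + 1) (m + 1) := by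
  have hm : 0 < (m : ℝ) + b + 2 := by linarith [m.cast_nonneg (α := ℝ)]
  have hΓ : Gamma (m + b + 2 + 1) = (m + b + 2) * Gamma (m + b + 2) := Gamma_add_one hm.ne'
  have hΓpos := Gamma_pos_of_pos hm
  rw [besselCoeff, besselCoeff, besselCoeff, Nat.factorial_succ, pow_succ]
  push_cast
  rw [show (m : ℝ) + 1 + b + 1 = m + b + 2 by ring,
    show (m : ℝ) + (b + 2) + 1 = m + b + 2 + 1 by ring,
    show (m : ℝ) + 1 + (b + 1) + 1 = m + b + 2 + 1 by ring, hΓ]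
  field_simp
  ring

theorem besselCoeff_zero_eq_add_one_mul (hb : -1 < b) :
    besselCoeff b 0 = (b + 1) * besselCoeff (b + 1) 0 := by
  simp only [besselCoeff_zero]
  rw [Gamma_add_one (by linarith : b + 1 ≠ 0), mul_inv, ← mul_assoc,
    mul_inv_cancel₀ (by linarith : b + 1 ≠ 0), one_mul]

end Coefficients

section Series

variable {b : ℝ}

theorem summable_besselCoeff_mul_pow (hb : 0 ≤ b) (t : ℝ) :
    Summable fun m => besselCoeff b m * t ^ m :=
  summable_mul_pow_of_abs_le (abs_besselCoeff_le hb) t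

theorem besselPhi_zero (b : ℝ) : besselPhi b 0 = (Gamma (b + 1))⁻¹ := by
  rw [besselPhi, tsum_eq_single 0 fun m hm => by simp [hm], pow_zero, mul_one, besselCoeff_zero]

theorem hasDerivAt_besselPhi (hb : 0 ≤ b) (t : ℝ) :
    HasDerivAt (besselPhi b) (-besselPhi (b + 1) t) t := by
  have h := hasDerivAt_tsum_mul_pow_of_abs_le (abs_besselCoeff_le hb) t
  simp only [succ_mul_besselCoeff_succ, neg_mul, tsum_neg] at h
  exact h

theorem continuous_besselPhi (hb : 0 ≤ b) : Continuous (besselPhi b) :=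
  continuous_iff_continuousAt.2 fun t => (hasDerivAt_besselPhi hb t).continuousAt

theorem besselPhi_add_mul_besselPhi_add_two (hb : 0 ≤ b) (t : ℝ) :
    besselPhi b t + t * besselPhi (b + 2) t = (b + 1) * besselPhi (b + 1) t := by
  have hb' : -1 < b := by linarith
  have h₀ := summable_besselCoeff_mul_pow hb t
  have h₁ := (summable_besselCoeff_mul_pow (by linarith : 0 ≤ b + 1) t).mul_left (b + 1)
  have h₂ := (summable_besselCoeff_mul_pow (by linarith : 0 ≤ b + 2) t).mul_left t
  rw [besselPhi, besselPhi, besselPhi, ← tsum_mul_left, ← tsum_mul_left, h₀.tsum_eq_zero_add,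
    h₁.tsum_eq_zero_add, add_assoc, ← ((summable_nat_add_iff 1).2 h₀).tsum_add h₂]
  congr 1
  · simp [besselCoeff_zero_eq_add_one_mul hb']
  · congr 1 with m
    rw [pow_succ, ← mul_assoc (b + 1), ← besselCoeff_succ_add_besselCoeff_add_two hb']
    ring

end Series

section Positivity

variable {a : ℝ}

theorem hasDerivAt_besselPhi_sq_sub (ha : 0 ≤ a) (t : ℝ) :
    HasDerivAt (fun t => besselPhi a t ^ 2 - t * besselPhi (a + 1) t ^ 2)
      (besselPhi (a + 1) t * ((2 * a + 1) * besselPhi (a + 1) t - 4 * besselPhi a t)) t := by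
  have hv := hasDerivAt_besselPhi (by linarith : 0 ≤ a + 1) t
  have hrec := besselPhi_add_mul_besselPhi_add_two ha t
  rw [show a + 1 + 1 = a + 2 by ring] at hv
  refine (((hasDerivAt_besselPhi ha t).pow 2).sub ((hasDerivAt_id t).mul (hv.pow 2))).congr_deriv ?_
  simp only [id, Pi.pow_apply, Nat.cast_ofNat]
  linear_combination (2 * besselPhi (a + 1) t) * hrec

theorem besselPhi_add_one_pos_of_forall_pos (ha : 0 ≤ a) {t₀ : ℝ} (ht₀ : 0 < t₀)
    (hpos : ∀ t ∈ Ioo 0 t₀, 0 < besselPhi a t) : 0 < besselPhi (a + 1) t₀ := by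
  set L : ℝ → ℝ := fun t => t ^ (a + 1) * besselPhi (a + 1) t
  have hderiv : ∀ t, 0 < t → HasDerivAt L (t ^ a * besselPhi a t) t := by
    intro t ht
    have hv := hasDerivAt_besselPhi (by linarith : 0 ≤ a + 1) t
    have hrec := besselPhi_add_mul_besselPhi_add_two ha t
    rw [show a + 1 + 1 = a + 2 by ring] at hv
    refine ((hasDerivAt_rpow_const (p := a + 1) (Or.inl ht.ne')).mul hv).congr_deriv ?_
    rw [add_sub_cancel_right, rpow_add_one ht.ne']
    linear_combination (-t ^ a) * hrec
  have hmono : StrictMonoOn L (Icc 0 t₀) := by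
    refine strictMonoOn_of_deriv_pos (convex_Icc 0 t₀) ?_ fun t ht => ?_
    · exact ((continuous_rpow_const (by linarith)).mul
        (continuous_besselPhi (by linarith))).continuousOn
    · rw [interior_Icc] at ht
      rw [(hderiv t ht.1).deriv]
      exact mul_pos (rpow_pos_of_pos ht.1 a) (hpos t ht)
  have hL := hmono (left_mem_Icc.2 ht₀.le) (right_mem_Icc.2 ht₀.le) ht₀
  simp only [L, zero_rpow (by linarith : a + 1 ≠ 0), zero_mul] at hL
  exact pos_of_mul_pos_right hL (rpow_pos_of_pos ht₀ _).le

theorem besselPhi_pos_of_forall_Ico (ha : 0 < a) {t₀ : ℝ} (ht₀ : t₀ ∈ Ioc 0 (a ^ 2 / 4))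
    (h : ∀ t ∈ Ico 0 t₀, 0 < besselPhi a t ∧ 0 < besselPhi (a + 1) t ∧
      t * besselPhi (a + 1) t ^ 2 < besselPhi a t ^ 2) :
    0 < besselPhi a t₀ ∧ 0 < besselPhi (a + 1) t₀ ∧
      t₀ * besselPhi (a + 1) t₀ ^ 2 < besselPhi a t₀ ^ 2 := by
  set u := besselPhi a
  set v := besselPhi (a + 1)
  have hv : 0 < v t₀ :=
    besselPhi_add_one_pos_of_forall_pos ha.le ht₀.1 fun t ht => (h t ⟨ht.1.le, ht.2⟩).1
  have hE : t₀ * v t₀ ^ 2 < u t₀ ^ 2 := by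
    by_contra! hE
    have hu : u t₀ ≤ a / 2 * v t₀ := by
      have : t₀ * v t₀ ^ 2 ≤ (a / 2 * v t₀) ^ 2 := by nlinarith [ht₀.2]
      exact (abs_le_of_sq_le_sq' (hE.trans this) (by positivity)).2
    have hderiv := hasDerivAt_besselPhi_sq_sub ha.le t₀
    obtain ⟨t, hlt, htI⟩ := ((hderiv.eventually_nhdsLT_lt (by nlinarith)).and
      (Ico_mem_nhdsLT ht₀.1)).exists
    linarith [(h t htI).2.2]
  have hu : 0 ≤ u t₀ := by
    have hsub : closure (Ico 0 t₀) ⊆ {t | 0 ≤ u t} :=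
      (isClosed_le continuous_const (continuous_besselPhi ha.le)).closure_subset_iff.2
        fun t ht => (h t ht).1.le
    exact hsub (by rw [closure_Ico ht₀.1.ne]; exact right_mem_Icc.2 ht₀.1.le)
  refine ⟨hu.lt_of_ne fun hu0 => ?_, hv, hE⟩
  rw [← hu0] at hE
  nlinarith [ht₀.1]

theorem besselPhi_pos_of_mem_Icc (ha : 0 < a) {t : ℝ} (ht : t ∈ Icc 0 (a ^ 2 / 4)) :
    0 < besselPhi a t ∧ 0 < besselPhi (a + 1) t ∧
      t * besselPhi (a + 1) t ^ 2 < besselPhi a t ^ 2 := by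
  have hu := continuous_besselPhi ha.le
  have hv := continuous_besselPhi (by linarith : 0 ≤ a + 1)
  refine Icc_subset_of_isOpen_of_forall_Ico_subset (U := {t | _ ∧ _ ∧ _}) ?_ ?_
    (fun t₀ ht₀ h => besselPhi_pos_of_forall_Ico ha ht₀ h) ht
  · exact (isOpen_lt continuous_const hu).inter ((isOpen_lt continuous_const hv).inter
      (isOpen_lt (continuous_id.mul (hv.pow 2)) (hu.pow 2)))
  · simp only [mem_ofPred_eq, besselPhi_zero, zero_mul]
    have := Gamma_pos_of_pos (by linarith : 0 < a + 1)
    have := Gamma_pos_of_pos (by linarith : 0 < a + 1 + 1)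
    exact ⟨by positivity, by positivity, by positivity⟩

end Positivity

theorem besselJ_eq_rpow_mul_besselPhi (b : ℝ) {z : ℝ} (hz : 0 < z) :
    besselJ b z = (z / 2) ^ b * besselPhi b ((z / 2) ^ 2) := by
  rw [besselJ, besselPhi, ← tsum_mul_left]
  congr 1 with m
  rw [rpow_add (by positivity), show 2 * (m : ℝ) = (2 * m : ℕ) by push_cast; ring, rpow_natCast,
    pow_mul, besselCoeff]
  ring

theorem besselJ_mul_eq_rpow_mul_besselPhi (b : ℝ) {c y : ℝ} (hc : 0 < c) (hy : 0 < y) :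
    besselJ b (c * y) = y ^ b * ((c / 2) ^ b * besselPhi b ((c * y / 2) ^ 2)) := by
  rw [besselJ_eq_rpow_mul_besselPhi b (by positivity), ← mul_assoc,
    ← mul_rpow hy.le (by positivity), show y * (c / 2) = c * y / 2 by ring]

section Monotonicity

variable {a : ℝ}

theorem antitoneOn_besselPhi (ha : 0 < a) : AntitoneOn (besselPhi a) (Icc 0 (a ^ 2 / 4)) := by
  refine antitoneOn_of_deriv_nonpos (convex_Icc _ _) (continuous_besselPhi ha.le).continuousOn
    (fun t _ => (hasDerivAt_besselPhi ha.le t).differentiableAt.differentiableWithinAt)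
    fun t ht => ?_
  rw [(hasDerivAt_besselPhi ha.le t).deriv, neg_nonpos]
  exact (besselPhi_pos_of_mem_Icc ha (interior_subset ht)).2.1.le

theorem mul_besselPhi_add_one_lt (ha : 0 < a) {s : ℝ} (hs : s ∈ Icc 0 (a / 2)) :
    s * besselPhi (a + 1) (s ^ 2) < besselPhi a (s ^ 2) := by
  obtain ⟨hu, hv, hlt⟩ := besselPhi_pos_of_mem_Icc ha ⟨sq_nonneg s, by nlinarith [hs.1, hs.2]⟩
  exact lt_of_pow_lt_pow_left₀ 2 hu.le (by linarith)

theorem monotoneOn_exp_mul_besselPhi (ha : 0 < a) :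
    MonotoneOn (fun y => exp (a * y) * besselPhi a ((a * y / 2) ^ 2)) (Icc 0 1) := by
  have hderiv : ∀ y, HasDerivAt (fun y => exp (a * y) * besselPhi a ((a * y / 2) ^ 2))
      (a * exp (a * y) * (besselPhi a ((a * y / 2) ^ 2) -
        a * y / 2 * besselPhi (a + 1) ((a * y / 2) ^ 2))) y := by
    intro y
    have hs : HasDerivAt (fun y => (a * y / 2) ^ 2) (a * (a * y / 2)) y :=
      ((((hasDerivAt_id y).const_mul a).div_const 2).pow 2).congr_deriv (by simp only [id]; ring)
    refine (((hasDerivAt_id y).const_mul a).exp.mul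
      ((hasDerivAt_besselPhi ha.le _).comp y hs)).congr_deriv ?_
    simp only [id, Function.comp_apply]
    ring
  refine monotoneOn_of_deriv_nonneg (convex_Icc 0 1)
    (fun y _ => (hderiv y).continuousAt.continuousWithinAt)
    (fun y _ => (hderiv y).differentiableAt.differentiableWithinAt) fun y hy => ?_
  rw [interior_Icc] at hy
  rw [(hderiv y).deriv]
  have hlt :=
    mul_besselPhi_add_one_lt ha (s := a * y / 2) ⟨by nlinarith [hy.1], by nlinarith [hy.2]⟩
  have := exp_pos (a * y)
  have : 0 ≤ besselPhi a ((a * y / 2) ^ 2) - a * y / 2 * besselPhi (a + 1) ((a * y / 2) ^ 2) :=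
    sub_nonneg.2 hlt.le
  positivity

theorem besselPhi_sq_half_le (ha : 0 < a) {y : ℝ} (hy : y ∈ Icc 0 1) :
    besselPhi a ((a / 2) ^ 2) ≤ besselPhi a ((a * y / 2) ^ 2) := by
  have hle : (a * y / 2) ^ 2 ≤ (a / 2) ^ 2 :=
    pow_le_pow_left₀ (by have := hy.1; positivity) (by nlinarith [hy.2]) 2
  exact antitoneOn_besselPhi ha ⟨by positivity, by linarith⟩ ⟨by positivity, by linarith⟩ hle

theorem besselPhi_le_exp_mul_besselPhi_sq_half (ha : 0 < a) {y : ℝ} (hy : y ∈ Icc 0 1) :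
    besselPhi a ((a * y / 2) ^ 2) ≤ exp (a * (1 - y)) * besselPhi a ((a / 2) ^ 2) := by
  have h := monotoneOn_exp_mul_besselPhi ha hy (right_mem_Icc.2 zero_le_one) hy.2
  rw [mul_sub, mul_one, exp_sub, div_mul_eq_mul_div, le_div_iff₀ (exp_pos _)]
  simpa only [mul_one, mul_comm (exp (a * y))] using h

end Monotonicity

/-- For `a > 0` and `0 < x ≤ 1`, `x^a J_a(a) ≤ J_a(ax) ≤ e^{a(1-x)} x^a J_a(a)`;
in particular `J_a(ax) > 0` whenever `J_a(a) > 0`. -/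
theorem besselJ_bounds (a : ℝ) (ha : 0 < a) (x : ℝ) (hx0 : 0 < x) (hx1 : x ≤ 1) :
    x ^ a * besselJ a a ≤ besselJ a (a * x) ∧
      besselJ a (a * x) ≤ Real.exp (a * (1 - x)) * (x ^ a * besselJ a a) ∧
      (0 < besselJ a a → 0 < besselJ a (a * x)) := by
  have hJ := besselJ_mul_eq_rpow_mul_besselPhi a ha hx0
  have hJ₁ := besselJ_eq_rpow_mul_besselPhi a ha
  have hx : x ∈ Icc 0 1 := ⟨hx0.le, hx1⟩
  have hlower : x ^ a * besselJ a a ≤ besselJ a (a * x) := by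
    rw [hJ, hJ₁]
    gcongr
    exact besselPhi_sq_half_le ha hx
  refine ⟨hlower, ?_, fun hpos => (mul_pos (rpow_pos_of_pos hx0 a) hpos).trans_le hlower⟩
  calc besselJ a (a * x)
      ≤ x ^ a * ((a / 2) ^ a * (exp (a * (1 - x)) * besselPhi a ((a / 2) ^ 2))) := by
        rw [hJ]
        gcongr
        exact besselPhi_le_exp_mul_besselPhi_sq_half ha hx
    _ = exp (a * (1 - x)) * (x ^ a * besselJ a a) := by
        rw [hJ₁]
        ring
end

section
/- For real $a \geq 2$ and $\frac{1}{3} \leq x < \frac{1}{2}$, the Bessel function of the first kind satisfies $|J_a(ax)| \leq C\, e^{a(2/3 - \log 2)}\, a^{-1/3}$ for an absolute constant $C$; in particular, $a^{1/3} J_a(ax) \to 0$ as $a \to \infty$, uniformly in $x \in [1/3, 1/2)$. -/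
/-!
Dominating the series termwise with `Γ(m + a + 1) ≥ (a + 1)^m Γ(a + 1)` gives
`|J_a(z)| ≤ (z/2)^a e^{(z/2)^2/(a+1)} / Γ(a + 1)`. For `z = a x` with `x ≤ 1/2`, the
Stirling-type bound `Γ(a + 1) ≥ (a/e)^a / (e a)` turns this into
`|J_a(ax)| ≤ e a e^{a(17/16 - 2 log 2)}`.
Since `log 2 > 31/48`, this exponent lies below `a (2/3 - log 2)` by more than `a/4`, which
absorbs the polynomial factor `a^{4/3}`.
-/

open Real Filter Topology

lemma Real.pow_mul_Gamma_le_Gamma_add_nat {s : ℝ} (hs : 0 < s) (m : ℕ) :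
    s ^ m * Gamma s ≤ Gamma (s + m) := by
  induction m with
  | zero => simp
  | succ m ih =>
    have hsm : 0 < s + m := by positivity
    calc s ^ (m + 1) * Gamma s = s * (s ^ m * Gamma s) := by ring
      _ ≤ (s + m) * Gamma (s + m) := by gcongr; linarith [m.cast_nonneg (α := ℝ)]
      _ = Gamma (s + ↑(m + 1)) := by rw [Nat.cast_succ, ← add_assoc, Gamma_add_one hsm.ne']

lemma Real.div_exp_one_rpow_le_mul_Gamma_add_one {a : ℝ} (ha : 1 ≤ a) :
    (a / exp 1) ^ a ≤ exp 1 * a * Gamma (a + 1) := by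
  set n := ⌊a⌋₊
  have hn : (n : ℝ) ≤ a := Nat.floor_le (by linarith)
  have hn' : a < n + 1 := Nat.lt_floor_add_one a
  have hn₁ : (1 : ℝ) ≤ n := by exact_mod_cast Nat.le_floor (by exact_mod_cast ha)
  have hfrac : (a / exp 1) ^ (a - n) ≤ a :=
    calc (a / exp 1) ^ (a - n) ≤ a ^ (a - n) := by
          gcongr
          exact div_le_self (by linarith) (one_le_exp zero_le_one)
      _ ≤ a ^ (1 : ℝ) := rpow_le_rpow_of_exponent_le ha (by linarith)
      _ = a := rpow_one a
  have hint : (a / exp 1) ^ n ≤ exp 1 * (n / exp 1) ^ n :=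
    calc (a / exp 1) ^ n = (a / n) ^ n * (n / exp 1) ^ n := by
          rw [← mul_pow]; field_simp
      _ ≤ (1 + (n : ℝ)⁻¹) ^ n * (n / exp 1) ^ n := by
          gcongr
          rw [div_le_iff₀ (by linarith)]
          field_simp
          linarith
      _ ≤ exp 1 * (n / exp 1) ^ n := by gcongr; exact one_add_inv_pow_le_exp
  have hfact : (n / exp 1) ^ n ≤ n.factorial := by
    have := pow_div_factorial_le_exp (n : ℝ) n.cast_nonneg n
    rw [div_pow, ← exp_nat_mul, mul_one]
    rw [div_le_iff₀ (by positivity)] at this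
    rw [div_le_iff₀ (by positivity)]
    linarith
  have hGamma : (n.factorial : ℝ) ≤ Gamma (a + 1) := by
    rw [← Gamma_nat_eq_factorial]
    exact Gamma_strictMonoOn_Ici.monotoneOn (by simp; linarith) (by simp; linarith)
      (by linarith)
  calc (a / exp 1) ^ a = (a / exp 1) ^ (a - n) * (a / exp 1) ^ n := by
        rw [← rpow_natCast, ← rpow_add (by positivity), sub_add_cancel]
    _ ≤ a * (exp 1 * (n / exp 1) ^ n) := by gcongr
    _ ≤ a * (exp 1 * Gamma (a + 1)) := by gcongr; exact hfact.trans hGamma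
    _ = exp 1 * a * Gamma (a + 1) := by ring

lemma abs_besselJ_term_le {a z : ℝ} (ha : -1 < a) (hz : 0 < z) (m : ℕ) :
    |(-1 : ℝ) ^ m / ((m.factorial : ℝ) * Gamma ((m : ℝ) + a + 1)) *
        (z / 2) ^ (2 * (m : ℝ) + a)| ≤
      (z / 2) ^ a / Gamma (a + 1) * (((z / 2) ^ 2 / (a + 1)) ^ m / m.factorial) := by
  have ha₁ : 0 < a + 1 := by linarith
  have hpow : (z / 2) ^ (2 * (m : ℝ) + a) = ((z / 2) ^ 2) ^ m * (z / 2) ^ a := by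
    rw [rpow_add (by positivity), ← pow_mul, ← rpow_natCast]
    push_cast
    ring_nf
  have hGamma : (a + 1) ^ m * Gamma (a + 1) ≤ Gamma ((m : ℝ) + a + 1) := by
    convert pow_mul_Gamma_le_Gamma_add_nat ha₁ m using 2
    ring
  have hΓ : 0 < Gamma (a + 1) := Gamma_pos_of_pos ha₁
  have hΓm : 0 < Gamma ((m : ℝ) + a + 1) :=
    Gamma_pos_of_pos (by linarith [m.cast_nonneg (α := ℝ)])
  rw [hpow, abs_mul, abs_div, abs_pow, abs_neg, abs_one, one_pow,
    abs_of_pos (by positivity : 0 < (m.factorial : ℝ) * Gamma ((m : ℝ) + a + 1)),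
    abs_of_pos (by positivity : 0 < ((z / 2) ^ 2) ^ m * (z / 2) ^ a)]
  calc 1 / ((m.factorial : ℝ) * Gamma ((m : ℝ) + a + 1)) * (((z / 2) ^ 2) ^ m * (z / 2) ^ a)
      ≤ 1 / ((m.factorial : ℝ) * ((a + 1) ^ m * Gamma (a + 1))) *
          (((z / 2) ^ 2) ^ m * (z / 2) ^ a) := by gcongr
    _ = (z / 2) ^ a / Gamma (a + 1) * (((z / 2) ^ 2 / (a + 1)) ^ m / m.factorial) := by
        rw [div_pow _ (a + 1)]
        field_simp

lemma abs_besselJ_le {a z : ℝ} (ha : -1 < a) (hz : 0 < z) :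
    |besselJ a z| ≤ (z / 2) ^ a / Gamma (a + 1) * exp ((z / 2) ^ 2 / (a + 1)) := by
  have hexp := exp_eq_exp_ℝ ▸ NormedSpace.expSeries_div_hasSum_exp ((z / 2) ^ 2 / (a + 1))
  exact tsum_of_norm_bounded (hexp.mul_left _) fun m ↦
    (norm_eq_abs _).trans_le (abs_besselJ_term_le ha hz m)

lemma abs_besselJ_mul_le {a x : ℝ} (ha : 1 ≤ a) (hx₀ : 0 < x) (hx : x ≤ 1 / 2) :
    |besselJ a (a * x)| ≤ exp 1 * a * exp (a * (17 / 16 - 2 * log 2)) := by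
  have ha₀ : 0 < a := by linarith
  have hz : a * x / 2 ≤ a / 4 := by nlinarith
  have hGamma := div_exp_one_rpow_le_mul_Gamma_add_one ha
  have hquot : (a * x / 2) ^ a / Gamma (a + 1) ≤ exp 1 * a * (exp 1 / 4) ^ a := by
    rw [div_le_iff₀ (Gamma_pos_of_pos (by linarith))]
    calc (a * x / 2) ^ a ≤ (a / 4) ^ a := by gcongr
      _ = (exp 1 / 4) ^ a * (a / exp 1) ^ a := by
          rw [← mul_rpow (by positivity) (by positivity)]; field_simp
      _ ≤ (exp 1 / 4) ^ a * (exp 1 * a * Gamma (a + 1)) := by gcongr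
      _ = exp 1 * a * (exp 1 / 4) ^ a * Gamma (a + 1) := by ring
  have hsq : (a * x / 2) ^ 2 / (a + 1) ≤ a / 16 := by
    have := pow_le_pow_left₀ (by positivity) hz 2
    rw [div_le_iff₀ (by linarith)]; nlinarith
  have hbase : (exp 1 / 4) ^ a = exp (a * (1 - 2 * log 2)) := by
    rw [rpow_def_of_pos (by positivity), log_div (exp_pos 1).ne' (by norm_num), log_exp,
      show (4 : ℝ) = 2 ^ 2 by norm_num, log_pow]
    ring_nf
  calc |besselJ a (a * x)|
      ≤ (a * x / 2) ^ a / Gamma (a + 1) * exp ((a * x / 2) ^ 2 / (a + 1)) :=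
        abs_besselJ_le (by linarith) (by positivity)
    _ ≤ exp 1 * a * (exp 1 / 4) ^ a * exp (a / 16) := by gcongr
    _ = exp 1 * a * exp (a * (17 / 16 - 2 * log 2)) := by
        rw [hbase, mul_assoc, ← exp_add]; ring_nf

lemma mul_exp_le_exp_mul_rpow {a : ℝ} (ha : 1 ≤ a) :
    a * exp (a * (17 / 16 - 2 * log 2)) ≤
      32 * exp (a * (2 / 3 - log 2)) * a ^ (-(1 / 3 : ℝ)) := by
  have ha₀ : 0 < a := by linarith
  have hsq : a ^ 2 ≤ 32 * exp (a / 4) := by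
    have := pow_div_factorial_le_exp (a / 4) (by positivity) 2
    rw [div_le_iff₀ (by positivity)] at this
    norm_num at this
    linarith
  have hcube : a * a ^ (1 / 3 : ℝ) ≤ a ^ 2 := by
    calc a * a ^ (1 / 3 : ℝ) ≤ a * a ^ (1 : ℝ) := by
          gcongr; norm_num
      _ = a ^ 2 := by rw [rpow_one, sq]
  have hlog : 31 / 48 < log 2 := by linarith [log_two_gt_d9]
  have hexp : exp (a / 4) * exp (a * (17 / 16 - 2 * log 2)) ≤ exp (a * (2 / 3 - log 2)) := by
    rw [← exp_add]; gcongr; nlinarith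
  have hinv : a ^ (1 / 3 : ℝ) * a ^ (-(1 / 3 : ℝ)) = 1 := by
    rw [← rpow_add ha₀]; norm_num
  calc a * exp (a * (17 / 16 - 2 * log 2))
      = a * (a ^ (1 / 3 : ℝ) * a ^ (-(1 / 3 : ℝ))) * exp (a * (17 / 16 - 2 * log 2)) := by
        rw [hinv, mul_one]
    _ = a * a ^ (1 / 3 : ℝ) * exp (a * (17 / 16 - 2 * log 2)) * a ^ (-(1 / 3 : ℝ)) := by ring
    _ ≤ 32 * exp (a / 4) * exp (a * (17 / 16 - 2 * log 2)) * a ^ (-(1 / 3 : ℝ)) := by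
        gcongr ?_ * _ * _; exact hcube.trans hsq
    _ ≤ 32 * exp (a * (2 / 3 - log 2)) * a ^ (-(1 / 3 : ℝ)) := by
        rw [mul_assoc 32]; gcongr

lemma abs_besselJ_mul_le_exp_mul_rpow {a x : ℝ} (ha : 1 ≤ a) (hx₀ : 0 < x)
    (hx : x ≤ 1 / 2) :
    |besselJ a (a * x)| ≤ 32 * exp 1 * exp (a * (2 / 3 - log 2)) * a ^ (-(1 / 3 : ℝ)) :=
  calc |besselJ a (a * x)| ≤ exp 1 * (a * exp (a * (17 / 16 - 2 * log 2))) := by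
        rw [← mul_assoc]; exact abs_besselJ_mul_le ha hx₀ hx
    _ ≤ exp 1 * (32 * exp (a * (2 / 3 - log 2)) * a ^ (-(1 / 3 : ℝ))) :=
        mul_le_mul_of_nonneg_left (mul_exp_le_exp_mul_rpow ha) (exp_pos 1).le
    _ = 32 * exp 1 * exp (a * (2 / 3 - log 2)) * a ^ (-(1 / 3 : ℝ)) := by ring

/-- For `a ≥ 2` and `1/3 ≤ x < 1/2`, `|J_a(ax)| ≤ C e^{a(2/3 - log 2)} a^{-1/3}` for an
absolute constant `C`; in particular `a^{1/3} J_a(ax) → 0` as `a → ∞`, uniformly in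
`x ∈ [1/3, 1/2)`. -/
theorem besselJ_decay_third_half :
    (∃ C : ℝ, 0 < C ∧ ∀ a : ℝ, 2 ≤ a → ∀ x : ℝ, 1 / 3 ≤ x → x < 1 / 2 →
        |besselJ a (a * x)| ≤
          C * Real.exp (a * (2 / 3 - Real.log 2)) * a ^ (-(1 / 3 : ℝ))) ∧
      ∀ ε : ℝ, 0 < ε → ∃ A : ℝ, 2 ≤ A ∧ ∀ a : ℝ, A ≤ a → ∀ x : ℝ,
        1 / 3 ≤ x → x < 1 / 2 → a ^ ((1 : ℝ) / 3) * |besselJ a (a * x)| < ε := by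
  refine ⟨⟨32 * exp 1, by positivity, fun a ha x hx₁ hx₂ ↦
    abs_besselJ_mul_le_exp_mul_rpow (by linarith) (by linarith) hx₂.le⟩, fun ε hε ↦ ?_⟩
  have hdecay : Tendsto (fun a ↦ 32 * exp 1 * exp (a * (2 / 3 - log 2))) atTop (𝓝 0) := by
    have hneg : 2 / 3 - log 2 < 0 := by linarith [log_two_gt_d9]
    simpa using (tendsto_exp_atBot.comp (tendsto_id.atTop_mul_const_of_neg hneg)).const_mul
      (32 * exp 1)
  obtain ⟨A, hA⟩ := eventually_atTop.1 (hdecay.eventually (gt_mem_nhds hε))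
  refine ⟨max 2 A, le_max_left _ _, fun a ha x hx₁ hx₂ ↦ ?_⟩
  have ha₂ : 2 ≤ a := le_of_max_le_left ha
  calc a ^ ((1 : ℝ) / 3) * |besselJ a (a * x)|
      ≤ a ^ ((1 : ℝ) / 3) *
          (32 * exp 1 * exp (a * (2 / 3 - log 2)) * a ^ (-(1 / 3 : ℝ))) := by
        gcongr; exact abs_besselJ_mul_le_exp_mul_rpow (by linarith) (by linarith) hx₂.le
    _ = 32 * exp 1 * exp (a * (2 / 3 - log 2)) := by
        rw [mul_left_comm, ← rpow_add (by linarith)]; norm_num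
    _ < ε := hA a (le_of_max_le_right ha)
end
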